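/- Let X, Y be real Banach spaces and T ∈ B(X,Y) with T ≠ 0 and R(T) closed. Assume N(T) ⊆ X and R(T) ⊆ Y are Chebyshev subspaces, so the Moore–Penrose metric generalized inverse T^M exists, and assume T^M is quasi-additive on R(T). Let δT ∈ B(X,Y) satisfy R(δT) ⊆ R(T), N(T) ⊆ N(δT), and ‖T^M δT‖ < 1, and put T̄ = T + δT. Then N(T̄) = N(T), R(T̄) = R(T), T̄ has a Moore–Penrose metric generalized inverse T̄^M = T^M ∘ (I_Y + δT T^M)^{-1} = (I_X + T^M δT)^{-1} ∘ T^M, and ‖T̄^M − T^M‖ ≤ ‖T^M‖ · ‖T^M δT‖/(1 − ‖T^M δT‖). -/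

import Mathlib

/-!
Since `R(δT) ⊆ R(T)` and `N(T) ⊆ N(δT)`, the perturbation factors through `T` on both sides:
`T ∘ (I + A) = T + δT` and, by quasi-additivity of `T^M` on `R(T)`,
`T^M ∘ (T + δT) = (I + A) ∘ T^M ∘ T`, where `A = T^M δT`. As `‖A‖ < 1`, `I + A` is invertible
with inverse `B`, and all Moore–Penrose identities for `B ∘ T^M` reduce to those for `T^M`.
Finally `B - I = -A B = -A - A (B - I)` gives `‖B - I‖ ≤ ‖A‖ / (1 - ‖A‖)`.
-/

open Metric Set

variable {X Y : Type*} [NormedAddCommGroup X] [NormedSpace ℝ X]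
  [NormedAddCommGroup Y] [NormedSpace ℝ Y]

/-- `F` is a bounded homogeneous operator: `F (c • x) = c • F x` for all real `c`,
and `F` maps bounded sets to bounded sets (equivalently, `‖F x‖ ≤ M * ‖x‖`). -/
def BddHomOp (F : X → Y) : Prop :=
  (∀ (c : ℝ) (x : X), F (c • x) = c • F x) ∧ ∃ M : ℝ, ∀ x, ‖F x‖ ≤ M * ‖x‖

/-- The norm of a (homogeneous) map: `sup {‖F x‖ : ‖x‖ = 1}`. -/
noncomputable def hnorm (F : X → Y) : ℝ :=
  sSup ((fun x => ‖F x‖) '' {x : X | ‖x‖ = 1})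

/-- `F` is quasi-additive on the subset `M`. -/
def QuasiAdditiveOn (F : X → Y) (M : Set X) : Prop :=
  ∀ x : X, ∀ z ∈ M, F (x + z) = F x + F z

/-- `S` is a bounded homogeneous generalized inverse of `T`: `T S T = T` and `S T S = S`. -/
def GenInv (T : X →L[ℝ] Y) (S : Y → X) : Prop :=
  BddHomOp S ∧ (∀ x, T (S (T x)) = T x) ∧ (∀ y, S (T (S y)) = S y)

/-- A subset `V` is Chebyshev: every point has a unique nearest point in `V`. -/
def IsChebyshev (V : Set X) : Prop :=
  ∀ x : X, ∃! v, v ∈ V ∧ ‖x - v‖ = Metric.infDist x V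

/-- `p` is the metric projector onto `V`: `p x ∈ V` is a nearest point to `x` in `V`. -/
def IsMetricProjOn (V : Set X) (p : X → X) : Prop :=
  ∀ x, p x ∈ V ∧ ‖x - p x‖ = Metric.infDist x V

/-- `TH` is a quasi-linear projector generalized inverse of `T`. -/
def QLPGenInv (T : X →L[ℝ] Y) (TH : Y → X) : Prop :=
  BddHomOp TH ∧ (∀ x, T (TH (T x)) = T x) ∧ (∀ y, TH (T (TH y)) = TH y) ∧
  (∃ P : X →L[ℝ] X, (∀ x, P (P x) = P x) ∧ Set.range ⇑P = {x : X | T x = 0} ∧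
    ∀ x, TH (T x) = x - P x) ∧
  (∃ Q : Y → Y, BddHomOp Q ∧ (∀ y, Q (Q y) = Q y) ∧ QuasiAdditiveOn Q (Set.range Q) ∧
    Set.range Q = Set.range ⇑T ∧ ∀ y, T (TH y) = Q y)

theorem norm_sub_one_le_of_one_add_mul_eq_one {R : Type*} [NormedRing R] {a b : R}
    (ha : ‖a‖ < 1) (hab : (1 + a) * b = 1) : ‖b - 1‖ ≤ ‖a‖ / (1 - ‖a‖) := by
  have hb : b - 1 = -a - a * (b - 1) := by
    rw [add_mul, one_mul] at hab
    rw [mul_sub, mul_one, ← hab]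
    abel
  have hle : ‖b - 1‖ ≤ ‖a‖ + ‖a‖ * ‖b - 1‖ :=
    calc ‖b - 1‖ = ‖-a - a * (b - 1)‖ := by rw [← hb]
      _ ≤ ‖-a‖ + ‖a * (b - 1)‖ := norm_sub_le _ _
      _ ≤ ‖a‖ + ‖a‖ * ‖b - 1‖ := by rw [norm_neg]; gcongr; exact norm_mul_le _ _
  rw [le_div_iff₀ (by linarith)]
  linarith

namespace BddHomOp

variable {F : X → Y}

theorem map_zero (hF : BddHomOp F) : F 0 = 0 := by
  simpa using hF.1 0 0

theorem map_neg (hF : BddHomOp F) (x : X) : F (-x) = -F x := by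
  simpa using hF.1 (-1) x

end BddHomOp

theorem QuasiAdditiveOn.map_sub {F : X → Y} {M : Set X} (hF : QuasiAdditiveOn F M)
    (hF' : BddHomOp F) (x : X) {z : X} (hz : -z ∈ M) : F (x - z) = F x - F z := by
  rw [sub_eq_add_neg, hF x _ hz, hF'.map_neg, ← sub_eq_add_neg]

section HomogeneousNorm

variable {E F G : Type*} [NormedAddCommGroup E] [NormedAddCommGroup F] [NormedAddCommGroup G]

theorem hnorm_nonneg (f : E → F) : 0 ≤ hnorm f :=
  Real.sSup_nonneg (by rintro _ ⟨x, -, rfl⟩; exact norm_nonneg _)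

theorem norm_le_hnorm {f : E → F} (hf : ∃ M : ℝ, ∀ x, ‖f x‖ ≤ M * ‖x‖) {x : E} (hx : ‖x‖ = 1) :
    ‖f x‖ ≤ hnorm f := by
  obtain ⟨M, hM⟩ := hf
  refine le_csSup ⟨M, ?_⟩ ⟨x, hx, rfl⟩
  rintro _ ⟨y, hy, rfl⟩
  simpa [mem_ofPred_eq.mp hy] using hM y

theorem hnorm_comp_le [NormedSpace ℝ F] [NormedSpace ℝ G] (L : F →L[ℝ] G) {f : E → F}
    (hf : ∃ M : ℝ, ∀ x, ‖f x‖ ≤ M * ‖x‖) :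
    hnorm (fun x => L (f x)) ≤ ‖L‖ * hnorm f :=
  Real.sSup_le
    (by
      rintro _ ⟨x, hx, rfl⟩
      exact (L.le_opNorm _).trans (by gcongr; exact norm_le_hnorm hf hx))
    (mul_nonneg (norm_nonneg L) (hnorm_nonneg f))

end HomogeneousNorm

section Perturbation

variable {T δT : X →L[ℝ] Y} {TM : Y → X} {A B : X →L[ℝ] X}

theorem apply_one_add_eq (hTM1 : ∀ x, T (TM (T x)) = T x) (hran : range ⇑δT ⊆ range ⇑T)
    (hA : ∀ x, A x = TM (δT x)) (x : X) : T ((1 + A) x) = (T + δT) x := by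
  obtain ⟨z, hz⟩ := hran ⟨x, rfl⟩
  simp only [add_apply, one_apply_eq_self, map_add, hA, ← hz, hTM1]

theorem perturbation_apply_TM_apply (hTM1 : ∀ x, T (TM (T x)) = T x)
    (hker : {x : X | T x = 0} ⊆ {x : X | δT x = 0}) (x : X) : δT (TM (T x)) = δT x := by
  have h : δT (x - TM (T x)) = 0 := hker (by rw [mem_ofPred_eq, map_sub, hTM1, sub_self])
  rwa [map_sub, sub_eq_zero, eq_comm] at h

theorem TM_add_perturbation_apply (hqT : QuasiAdditiveOn TM (range ⇑T))
    (hran : range ⇑δT ⊆ range ⇑T) (hA : ∀ x, A x = TM (δT x)) (y : Y) :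
    TM (y + δT (TM y)) = (1 + A) (TM y) := by
  rw [hqT y _ (hran ⟨_, rfl⟩), add_apply, one_apply_eq_self, hA]

theorem TM_perturbed_apply (hTM1 : ∀ x, T (TM (T x)) = T x)
    (hqT : QuasiAdditiveOn TM (range ⇑T)) (hran : range ⇑δT ⊆ range ⇑T)
    (hker : {x : X | T x = 0} ⊆ {x : X | δT x = 0}) (hA : ∀ x, A x = TM (δT x)) (x : X) :
    TM ((T + δT) x) = (1 + A) (TM (T x)) := by
  rw [← TM_add_perturbation_apply hqT hran hA, perturbation_apply_TM_apply hTM1 hker]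
  rfl

theorem TM_sub_perturbation_apply (hTM : BddHomOp TM) (hqT : QuasiAdditiveOn TM (range ⇑T))
    (hran : range ⇑δT ⊆ range ⇑T) (hA : ∀ x, A x = TM (δT x))
    (hB : ∀ x, (1 + A) (B x) = x) (y : Y) :
    TM (y - δT (B (TM y))) = B (TM y) := by
  have hneg : -δT (B (TM y)) ∈ range ⇑T := by
    rw [← map_neg]
    exact hran ⟨_, rfl⟩
  have hsum : B (TM y) + A (B (TM y)) = TM y := hB (TM y)
  rw [hqT.map_sub hTM y hneg, ← hA, eq_sub_of_add_eq' hsum, sub_sub_cancel]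

theorem ker_perturbed_eq (hTM : BddHomOp TM) (hTM1 : ∀ x, T (TM (T x)) = T x)
    (hqT : QuasiAdditiveOn TM (range ⇑T)) (hran : range ⇑δT ⊆ range ⇑T)
    (hker : {x : X | T x = 0} ⊆ {x : X | δT x = 0}) (hA : ∀ x, A x = TM (δT x))
    (hinj : Function.Injective ⇑(1 + A)) :
    {x : X | (T + δT) x = 0} = {x : X | T x = 0} := by
  ext x
  refine ⟨fun hx => ?_, fun hx => by
    rw [mem_ofPred_eq, add_apply, mem_ofPred_eq.mp hx, hker hx, add_zero]⟩
  have hTMT : TM (T x) = 0 := hinj <| by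
    rw [← TM_perturbed_apply hTM1 hqT hran hker hA, mem_ofPred_eq.mp hx, hTM.map_zero, map_zero]
  rw [mem_ofPred_eq, ← hTM1, hTMT, map_zero]

theorem range_perturbed_eq (hTM1 : ∀ x, T (TM (T x)) = T x) (hran : range ⇑δT ⊆ range ⇑T)
    (hA : ∀ x, A x = TM (δT x)) (hsurj : Function.Surjective ⇑(1 + A)) :
    range ⇑(T + δT) = range ⇑T := by
  have : ⇑(T + δT) = ⇑T ∘ ⇑(1 + A) := funext fun x => (apply_one_add_eq hTM1 hran hA x).symm
  rw [this, hsurj.range_comp]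

end Perturbation

theorem stmt_18_general [CompleteSpace X] (T δT : X →L[ℝ] Y)
    (πN : X → X) (πR : Y → Y)
    (TM : Y → X) (hTM : BddHomOp TM)
    (hTM1 : ∀ x, T (TM (T x)) = T x) (hTM2 : ∀ y, TM (T (TM y)) = TM y)
    (hTM3 : ∀ y, T (TM y) = πR y) (hTM4 : ∀ x, TM (T x) = x - πN x)
    (hqT : QuasiAdditiveOn TM (Set.range ⇑T))
    (hran : Set.range ⇑δT ⊆ Set.range ⇑T)
    (hker : {x : X | T x = 0} ⊆ {x : X | δT x = 0})
    (A : X →L[ℝ] X) (hA : ∀ x, A x = TM (δT x)) (hAn : ‖A‖ < 1) :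
    {x : X | (T + δT) x = 0} = {x : X | T x = 0} ∧
    Set.range ⇑(T + δT) = Set.range ⇑T ∧
    (∃ Ψ : Y → Y, (∀ y, Ψ y + δT (TM (Ψ y)) = y) ∧ (∀ y, Ψ (y + δT (TM y)) = y) ∧
      ∀ y, TM (Ψ y) = Ring.inverse (1 + A) (TM y)) ∧
    (∀ x, (T + δT) (Ring.inverse (1 + A) (TM ((T + δT) x))) = (T + δT) x) ∧
    (∀ y, Ring.inverse (1 + A) (TM ((T + δT) (Ring.inverse (1 + A) (TM y)))) =
      Ring.inverse (1 + A) (TM y)) ∧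
    (∀ y, (T + δT) (Ring.inverse (1 + A) (TM y)) = πR y) ∧
    (∀ x, Ring.inverse (1 + A) (TM ((T + δT) x)) = x - πN x) ∧
    hnorm (fun y => Ring.inverse (1 + A) (TM y) - TM y) ≤
      hnorm TM * (‖A‖ / (1 - ‖A‖)) := by
  have hunit : IsUnit (1 + A) := by
    simpa using isUnit_one_sub_of_norm_lt_one (x := -A) (by rwa [norm_neg])
  set B := Ring.inverse (1 + A)
  have hleft : ∀ x, B ((1 + A) x) = x := fun x => by
    simpa using DFunLike.congr_fun (Ring.inverse_mul_cancel _ hunit) x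
  have hright : ∀ x, (1 + A) (B x) = x := fun x => by
    simpa using DFunLike.congr_fun (Ring.mul_inverse_cancel _ hunit) x
  have hTB : ∀ x, (T + δT) (B x) = T x := fun x => by
    rw [← apply_one_add_eq hTM1 hran hA, hright]
  have hBTM : ∀ x, B (TM ((T + δT) x)) = TM (T x) := fun x => by
    rw [TM_perturbed_apply hTM1 hqT hran hker hA, hleft]
  have hTMΨ := TM_sub_perturbation_apply hTM hqT hran hA hright
  -- `Ψ = (I + δT T^M)⁻¹`, inverted through `B = (I + T^M δT)⁻¹`
  refine ⟨ker_perturbed_eq hTM hTM1 hqT hran hker hA (Function.LeftInverse.injective hleft),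
    range_perturbed_eq hTM1 hran hA (Function.RightInverse.surjective hright),
    ⟨fun y => y - δT (B (TM y)), fun y => ?_, fun y => ?_, hTMΨ⟩,
    fun x => ?_, fun y => ?_, fun y => ?_, fun x => ?_, ?_⟩
  · dsimp only
    rw [hTMΨ, sub_add_cancel]
  · dsimp only
    rw [TM_add_perturbation_apply hqT hran hA, hleft, add_sub_cancel_right]
  · rw [hBTM, add_apply, add_apply, hTM1, perturbation_apply_TM_apply hTM1 hker]
  · rw [hTB, hTM2]
  · rw [hTB, hTM3]
  · rw [hBTM, hTM4]
  · calc hnorm (fun y => B (TM y) - TM y) = hnorm (fun y => (B - 1) (TM y)) := rfl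
      _ ≤ ‖B - 1‖ * hnorm TM := hnorm_comp_le _ hTM.2
      _ ≤ ‖A‖ / (1 - ‖A‖) * hnorm TM := by
        gcongr
        · exact hnorm_nonneg TM
        · exact norm_sub_one_le_of_one_add_mul_eq_one hAn (Ring.mul_inverse_cancel _ hunit)
      _ = hnorm TM * (‖A‖ / (1 - ‖A‖)) := mul_comm _ _

theorem stmt_18 [CompleteSpace X] [CompleteSpace Y] (T δT : X →L[ℝ] Y) (hT : T ≠ 0)
    (hcl : IsClosed (Set.range ⇑T))
    (hN : IsChebyshev {x : X | T x = 0}) (hR : IsChebyshev (Set.range ⇑T))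
    (πN : X → X) (hπN : IsMetricProjOn {x : X | T x = 0} πN)
    (πR : Y → Y) (hπR : IsMetricProjOn (Set.range ⇑T) πR)
    (TM : Y → X) (hTM : BddHomOp TM)
    (hTM1 : ∀ x, T (TM (T x)) = T x) (hTM2 : ∀ y, TM (T (TM y)) = TM y)
    (hTM3 : ∀ y, T (TM y) = πR y) (hTM4 : ∀ x, TM (T x) = x - πN x)
    (hqT : QuasiAdditiveOn TM (Set.range ⇑T))
    (hran : Set.range ⇑δT ⊆ Set.range ⇑T)
    (hker : {x : X | T x = 0} ⊆ {x : X | δT x = 0})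
    (A : X →L[ℝ] X) (hA : ∀ x, A x = TM (δT x)) (hAn : ‖A‖ < 1) :
    {x : X | (T + δT) x = 0} = {x : X | T x = 0} ∧
    Set.range ⇑(T + δT) = Set.range ⇑T ∧
    (∃ Ψ : Y → Y, (∀ y, Ψ y + δT (TM (Ψ y)) = y) ∧ (∀ y, Ψ (y + δT (TM y)) = y) ∧
      ∀ y, TM (Ψ y) = Ring.inverse (1 + A) (TM y)) ∧
    (∀ x, (T + δT) (Ring.inverse (1 + A) (TM ((T + δT) x))) = (T + δT) x) ∧
    (∀ y, Ring.inverse (1 + A) (TM ((T + δT) (Ring.inverse (1 + A) (TM y)))) =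
      Ring.inverse (1 + A) (TM y)) ∧
    (∀ y, (T + δT) (Ring.inverse (1 + A) (TM y)) = πR y) ∧
    (∀ x, Ring.inverse (1 + A) (TM ((T + δT) x)) = x - πN x) ∧
    hnorm (fun y => Ring.inverse (1 + A) (TM y) - TM y) ≤
      hnorm TM * (‖A‖ / (1 - ‖A‖)) :=
  stmt_18_general T δT πN πR TM hTM hTM1 hTM2 hTM3 hTM4 hqT hran hker A hA hAn
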